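/- Let Δ be a group and let A, B be subgroups of Δ with c(A,B) finite. Then there exists a positive integer C such that for every natural number n, the cardinality of the set {Δ' ≤ Δ : c(A,Δ') ≤ n} is at most the cardinality of the set {Δ' ≤ Δ : c(B,Δ') ≤ C · n}, and the cardinality of {Δ' ≤ Δ : c(B,Δ') ≤ n} is at most the cardinality of {Δ' ≤ Δ : c(A,Δ') ≤ C · n} (inequalities of cardinals). -/

import Mathlib

/-- The commensurability index of two subgroups `A`, `B` of a group `G`:
`c(A,B) = [A : A ⊓ B] * [B : A ⊓ B]`. Following Mathlib's convention for
`Subgroup.relindex`, a value of `0` means the index is infinite. -/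
noncomputable def commIndex {G : Type*} [Group G] (A B : Subgroup G) : ℕ :=
  (A ⊓ B).relIndex A * (A ⊓ B).relIndex B

/-! The commensurability index is submultiplicative, `c(B,D) ≤ c(B,A) c(A,D)`, because each
relative index is: `[L : H ⊓ L] ≤ [L : H ⊓ K ⊓ L] = [K ⊓ L : H ⊓ K ⊓ L] [L : K ⊓ L]`, and the
first factor is at most `[K : H ⊓ K]`.
So with `C = c(A,B)`, every `Δ'` with `c(A,Δ') ≤ n` has `c(B,Δ') ≤ C n`, and symmetrically;
the cardinal inequalities are just these inclusions of sets. -/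

namespace Subgroup

variable {G : Type*} [Group G] {H K L : Subgroup G}

theorem relIndex_le_relIndex_mul_relIndex (hHK : H.relIndex K ≠ 0) (hKL : K.relIndex L ≠ 0) :
    H.relIndex L ≤ H.relIndex K * K.relIndex L := by
  have hH : H.relIndex (K ⊓ L) ≠ 0 := mt (relIndex_eq_zero_of_le_right inf_le_left) hHK
  have hHKL : (H ⊓ K).relIndex L ≠ 0 := by
    rw [← relIndex_inf_mul_relIndex]
    exact mul_ne_zero hH hKL
  calc H.relIndex L ≤ (H ⊓ K).relIndex L := relIndex_le_of_le_left inf_le_left hHKL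
    _ = H.relIndex (K ⊓ L) * K.relIndex L := (relIndex_inf_mul_relIndex H K L).symm
    _ ≤ H.relIndex K * K.relIndex L :=
      Nat.mul_le_mul_right _ (relIndex_le_of_le_right inf_le_left hHK)

end Subgroup

section CommIndex

variable {G : Type*} [Group G] {A B D : Subgroup G}

open Subgroup

theorem commIndex_eq_mul (A B : Subgroup G) : commIndex A B = B.relIndex A * A.relIndex B := by
  rw [commIndex, inf_relIndex_left, inf_relIndex_right]

theorem commIndex_comm (A B : Subgroup G) : commIndex A B = commIndex B A := by
  rw [commIndex_eq_mul, commIndex_eq_mul, mul_comm]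

theorem commIndex_ne_zero_iff : commIndex A B ≠ 0 ↔ B.relIndex A ≠ 0 ∧ A.relIndex B ≠ 0 := by
  rw [commIndex_eq_mul, mul_ne_zero_iff]

theorem commIndex_ne_zero_trans (hAB : commIndex A B ≠ 0) (hBD : commIndex B D ≠ 0) :
    commIndex A D ≠ 0 := by
  rw [commIndex_ne_zero_iff] at hAB hBD ⊢
  exact ⟨relIndex_ne_zero_trans hBD.1 hAB.1, relIndex_ne_zero_trans hAB.2 hBD.2⟩

theorem commIndex_le_mul (hAB : commIndex A B ≠ 0) (hBD : commIndex B D ≠ 0) :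
    commIndex A D ≤ commIndex A B * commIndex B D := by
  rw [commIndex_ne_zero_iff] at hAB hBD
  simp only [commIndex_eq_mul]
  calc D.relIndex A * A.relIndex D
      ≤ (D.relIndex B * B.relIndex A) * (A.relIndex B * B.relIndex D) :=
        Nat.mul_le_mul (relIndex_le_relIndex_mul_relIndex hBD.1 hAB.1)
          (relIndex_le_relIndex_mul_relIndex hAB.2 hBD.2)
    _ = B.relIndex A * A.relIndex B * (D.relIndex B * B.relIndex D) := by ring

theorem setOf_commIndex_le_subset (hAB : commIndex A B ≠ 0) (n : ℕ) :
    {D : Subgroup G | commIndex A D ≠ 0 ∧ commIndex A D ≤ n} ⊆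
      {D : Subgroup G | commIndex B D ≠ 0 ∧ commIndex B D ≤ commIndex A B * n} := by
  rintro D ⟨hAD, hADn⟩
  have hBA : commIndex B A ≠ 0 := by rwa [commIndex_comm]
  refine ⟨commIndex_ne_zero_trans hBA hAD, (commIndex_le_mul hBA hAD).trans ?_⟩
  rw [commIndex_comm B A]
  exact Nat.mul_le_mul_left _ hADn

end CommIndex

/-- If `A`, `B` are commensurable subgroups of `Δ`, then there is a positive
integer `C` such that for every `n` the number of subgroups `Δ'` of `Δ` with
`c(A,Δ') ≤ n` is at most the number with `c(B,Δ') ≤ C * n`, and vice versa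
(inequalities of cardinals). -/
theorem commIndex_growth_equiv {Δ : Type*} [Group Δ] (A B : Subgroup Δ)
    (hAB : commIndex A B ≠ 0) :
    ∃ C : ℕ, 0 < C ∧ ∀ n : ℕ,
      Cardinal.mk {Δ' : Subgroup Δ | commIndex A Δ' ≠ 0 ∧ commIndex A Δ' ≤ n} ≤
        Cardinal.mk
          {Δ' : Subgroup Δ | commIndex B Δ' ≠ 0 ∧ commIndex B Δ' ≤ C * n} ∧
      Cardinal.mk {Δ' : Subgroup Δ | commIndex B Δ' ≠ 0 ∧ commIndex B Δ' ≤ n} ≤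
        Cardinal.mk
          {Δ' : Subgroup Δ | commIndex A Δ' ≠ 0 ∧ commIndex A Δ' ≤ C * n} := by
  have hBA : commIndex B A ≠ 0 := by rwa [commIndex_comm]
  refine ⟨commIndex A B, Nat.pos_of_ne_zero hAB, fun n => ⟨?_, ?_⟩⟩
  · exact Cardinal.mk_le_mk_of_subset (setOf_commIndex_le_subset hAB n)
  · rw [commIndex_comm A B]
    exact Cardinal.mk_le_mk_of_subset (setOf_commIndex_le_subset hBA n)
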